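/- arXiv:1111.4600 — 2 statements merged into one kernel-verified Lean document; each statement's English description precedes it below -/
import Mathlib

section
/- Let G be a nontrivial strongly connected directed graph and let i, j be nodes of G. For every integer n ≥ ep(G) + c(G) + cd(G) − 1, there exists a path of length n + c(G) from i to j if and only if there exists a path of length n from i to j. Equivalently, for an irreducible max-plus matrix A with G = G(A): A^{⊗(n+c(G))}_{i,j} = −∞ if and only if A^{⊗n}_{i,j} = −∞. -/
/-!
Cutting a closed subwalk out of a walk from `i` to `j` shortens it by the length of a closed
walk, hence by a multiple of `c`; repeating this leaves a simple walk, of length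
`s ≤ cd(G)` with `s ≡ n [MOD c]`. Conversely, for every `m ≥ ep + cd(G)` with `m ≡ s [MOD c]`,
prefixing a closed walk of length `m - s ≥ ep` at `i` gives a walk of length `m`. So beyond
`ep + cd(G)` the existence of a walk of length `n` from `i` to `j` depends only on `n` modulo
`c`, and both `n` and `n + c` are beyond that bound when `c > 0`. Over max-plus,
`A^{⊗n}_{i,j} ≠ −∞` exactly when `G(A)` has a walk of length `n` from `i` to `j`.
-/

namespace Transients

variable {V : Type*}

/-- A walk of length `n` in the graph with edge relation `E`, given by its node
sequence `p 0, p 1, …, p n`. -/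
def IsWalk (E : V → V → Prop) (n : ℕ) (p : ℕ → V) : Prop :=
  ∀ k, k < n → E (p k) (p (k + 1))

/-- A closed walk: start node equals end node. -/
def IsClosedWalk (E : V → V → Prop) (n : ℕ) (p : ℕ → V) : Prop :=
  IsWalk E n p ∧ p 0 = p n

/-- A nonempty elementary closed walk: closed, and no node repeats except start = end. -/
def IsElemClosedWalk (E : V → V → Prop) (n : ℕ) (p : ℕ → V) : Prop :=
  0 < n ∧ IsClosedWalk E n p ∧ ∀ k l, k < n → l < n → p k = p l → k = l

/-- A simple walk: no node is visited twice. -/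
def IsSimpleWalk (E : V → V → Prop) (n : ℕ) (p : ℕ → V) : Prop :=
  IsWalk E n p ∧ ∀ k l, k ≤ n → l ≤ n → p k = p l → k = l

def StronglyConnected (E : V → V → Prop) : Prop :=
  ∀ i j : V, ∃ n p, IsWalk E n p ∧ p 0 = i ∧ p n = j

def NontrivialGraph (E : V → V → Prop) : Prop := ∃ i j, E i j

/-- The weight `w_*` of a walk in an edge-weighted graph. -/
noncomputable def walkWeight (w : V → V → ℝ) (n : ℕ) (p : ℕ → V) : ℝ :=
  ∑ k ∈ Finset.range n, w (p k) (p (k + 1))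

/-- The rate ρ(G): supremum of `w_*(γ)/ℓ(γ)` over nonempty closed walks γ. -/
noncomputable def rate (E : V → V → Prop) (w : V → V → ℝ) : ℝ :=
  sSup {x : ℝ | ∃ n p, 0 < n ∧ IsClosedWalk E n p ∧ x = walkWeight w n p / n}

/-- A critical closed walk: nonempty, closed, and its weight is ρ(G) times its length. -/
def IsCriticalWalk (E : V → V → Prop) (w : V → V → ℝ) (n : ℕ) (p : ℕ → V) : Prop :=
  0 < n ∧ IsClosedWalk E n p ∧ walkWeight w n p = rate E w * n

/-- A critical node: lies on some critical closed walk. -/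
def CriticalNode (E : V → V → Prop) (w : V → V → ℝ) (i : V) : Prop :=
  ∃ n p k, IsCriticalWalk E w n p ∧ k ≤ n ∧ p k = i

/-- A critical edge: lies on some critical closed walk. -/
def CriticalEdge (E : V → V → Prop) (w : V → V → ℝ) (i j : V) : Prop :=
  ∃ n p k, IsCriticalWalk E w n p ∧ k < n ∧ p k = i ∧ p (k + 1) = j

/-- The non-critical rate ρ_nc(G): supremum of mean weights of nonempty closed walks
containing no critical node. -/
noncomputable def ncRate (E : V → V → Prop) (w : V → V → ℝ) : ℝ :=
  sSup {x : ℝ | ∃ n p, 0 < n ∧ IsClosedWalk E n p ∧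
    (∀ k, k ≤ n → ¬ CriticalNode E w (p k)) ∧ x = walkWeight w n p / n}

/-- Δ(G), the maximum edge weight. -/
noncomputable def maxWeight (E : V → V → Prop) (w : V → V → ℝ) : ℝ :=
  sSup {x : ℝ | ∃ i j, E i j ∧ x = w i j}

/-- δ(G), the minimum edge weight. -/
noncomputable def minWeight (E : V → V → Prop) (w : V → V → ℝ) : ℝ :=
  sInf {x : ℝ | ∃ i j, E i j ∧ x = w i j}

open Classical in
/-- Δ_nc(G), the maximum weight of an edge joining two non-critical nodes
(ρ(G) if there is no such edge). -/
noncomputable def maxNcWeight (E : V → V → Prop) (w : V → V → ℝ) : ℝ :=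
  if (∃ i j, E i j ∧ ¬ CriticalNode E w i ∧ ¬ CriticalNode E w j) then
    sSup {x : ℝ | ∃ i j, E i j ∧ ¬ CriticalNode E w i ∧ ¬ CriticalNode E w j ∧ x = w i j}
  else rate E w

/-- `d` is the greatest common divisor of the set `S` of naturals. -/
def IsGcdOf (d : ℕ) (S : Set ℕ) : Prop :=
  (∀ s ∈ S, d ∣ s) ∧ ∀ e : ℕ, (∀ s ∈ S, e ∣ s) → e ∣ d

/-- The set of lengths of nonempty closed walks in the graph. -/
def ClosedLengths (E : V → V → Prop) : Set ℕ :=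
  {n | 0 < n ∧ ∃ p, IsClosedWalk E n p}

/-- The set of lengths of nonempty closed walks starting at `i`. -/
def ClosedLengthsAt (E : V → V → Prop) (i : V) : Set ℕ :=
  {n | 0 < n ∧ ∃ p, IsWalk E n p ∧ p 0 = i ∧ p n = i}

/-- There is a (possibly empty) closed walk of length `n` starting at `i`. -/
def HasClosedWalkAt (E : V → V → Prop) (i : V) (n : ℕ) : Prop :=
  ∃ p, IsWalk E n p ∧ p 0 = i ∧ p n = i

/-- cd(G), the cab driver's diameter: the maximum length of simple walks. -/
noncomputable def cabDiameter (E : V → V → Prop) : ℕ :=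
  sSup {n | ∃ p, IsSimpleWalk E n p}

/-- cr(G), the circumference: the maximum length of nonempty elementary closed walks. -/
noncomputable def circumference (E : V → V → Prop) : ℕ :=
  sSup {n | ∃ p, IsElemClosedWalk E n p}

/-- `g` is the girth of the graph: the minimum length of nonempty elementary closed walks. -/
def IsGirth (E : V → V → Prop) (g : ℕ) : Prop :=
  IsLeast {n | ∃ p, IsElemClosedWalk E n p} g

/-- `ep` is the exploration penalty of a graph of cyclicity `c`: the least `m` such that
for every node `i` and every multiple `n` of `c` with `n ≥ m` there is a closed walk
of length `n` starting at `i`. -/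
def IsEp (E : V → V → Prop) (c ep : ℕ) : Prop :=
  IsLeast {m | ∀ i : V, ∀ n : ℕ, c ∣ n → m ≤ n → HasClosedWalkAt E i n} ep

/-- `i` and `j` lie in the same strongly connected component of the graph. -/
def SameComp (E : V → V → Prop) (i j : V) : Prop :=
  (∃ n p, IsWalk E n p ∧ p 0 = i ∧ p n = j) ∧ (∃ n p, IsWalk E n p ∧ p 0 = j ∧ p n = i)

/-- `m` is the exploration penalty of the strongly connected component of `k`
(a component of cyclicity `c`). -/
def IsCompEp (E : V → V → Prop) (k : V) (c m : ℕ) : Prop :=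
  IsLeast {m' | ∀ i : V, SameComp E k i → ∀ n : ℕ, c ∣ n → m' ≤ n → HasClosedWalkAt E i n} m

/-- Max-plus matrix product. -/
noncomputable def mpMul {N : ℕ} (A B : Matrix (Fin N) (Fin N) (WithBot ℝ)) :
    Matrix (Fin N) (Fin N) (WithBot ℝ) :=
  fun i j => Finset.univ.sup fun k => A i k + B k j

/-- Max-plus matrix power, `A^{⊗n}`. -/
noncomputable def mpPow {N : ℕ} (A : Matrix (Fin N) (Fin N) (WithBot ℝ)) :
    ℕ → Matrix (Fin N) (Fin N) (WithBot ℝ)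
  | 0 => fun i j => if i = j then (0 : WithBot ℝ) else ⊥
  | n + 1 => mpMul A (mpPow A n)

/-- Max-plus matrix-vector product. -/
noncomputable def mpVec {N : ℕ} (A : Matrix (Fin N) (Fin N) (WithBot ℝ))
    (v : Fin N → WithBot ℝ) : Fin N → WithBot ℝ :=
  fun i => Finset.univ.sup fun j => A i j + v j

/-- The edge relation of the weighted graph `G(A)`. -/
def mEdge {N : ℕ} (A : Matrix (Fin N) (Fin N) (WithBot ℝ)) : Fin N → Fin N → Prop :=
  fun i j => A i j ≠ ⊥

/-- The edge weights of the weighted graph `G(A)`. -/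
noncomputable def mWeight {N : ℕ} (A : Matrix (Fin N) (Fin N) (WithBot ℝ)) :
    Fin N → Fin N → ℝ :=
  fun i j => WithBot.unbotD 0 (A i j)

/-- `A` is irreducible: `G(A)` is strongly connected and has at least one edge. -/
def MPIrreducible {N : ℕ} (A : Matrix (Fin N) (Fin N) (WithBot ℝ)) : Prop :=
  StronglyConnected (mEdge A) ∧ NontrivialGraph (mEdge A)

/-- The linear max-plus system `x(n) = A^{⊗n} ⊗ v`. -/
noncomputable def mpSystem {N : ℕ} (A : Matrix (Fin N) (Fin N) (WithBot ℝ)) (v : Fin N → ℝ)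
    (n : ℕ) : Fin N → WithBot ℝ :=
  mpVec (mpPow A n) fun j => (v j : WithBot ℝ)

/-- The set of indices from which the system `x_{A,v}` is periodic with increment
`p·ρ(A)`; its least element is the transient `n_{A,v}`. -/
noncomputable def SysTransientSet {N : ℕ} (A : Matrix (Fin N) (Fin N) (WithBot ℝ))
    (v : Fin N → ℝ) : Set ℕ :=
  {n₀ | ∃ p : ℕ, 0 < p ∧ ∀ n, n₀ ≤ n → ∀ i,
    mpSystem A v (n + p) i
      = mpSystem A v n i + ((p * rate (mEdge A) (mWeight A) : ℝ) : WithBot ℝ)}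

/-- The set of indices from which the powers of `A` are periodic with increment
`p·ρ(A)`; its least element is the transient `n_A`. -/
noncomputable def MatTransientSet {N : ℕ} (A : Matrix (Fin N) (Fin N) (WithBot ℝ)) : Set ℕ :=
  {n₀ | ∃ p : ℕ, 0 < p ∧ ∀ n, n₀ ≤ n → ∀ i j,
    mpPow A (n + p) i j
      = mpPow A n i j + ((p * rate (mEdge A) (mWeight A) : ℝ) : WithBot ℝ)}

/-- `‖v‖ = max_i v_i − min_i v_i`. -/
noncomputable def vnorm {N : ℕ} (v : Fin N → ℝ) : ℝ :=
  sSup (Set.range v) - sInf (Set.range v)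

def HasWalk (E : V → V → Prop) (n : ℕ) (i j : V) : Prop :=
  ∃ p, IsWalk E n p ∧ p 0 = i ∧ p n = j

section Walks

variable {E : V → V → Prop}

lemma IsWalk.mono {n m : ℕ} {p : ℕ → V} (hp : IsWalk E n p) (hm : m ≤ n) : IsWalk E m p :=
  fun k hk => hp k (by omega)

lemma IsWalk.drop {n : ℕ} {p : ℕ → V} (hp : IsWalk E n p) (k : ℕ) :
    IsWalk E (n - k) (fun t => p (k + t)) :=
  fun t ht => by simpa only [Nat.add_assoc] using hp (k + t) (by omega)

lemma HasWalk.trans {m s : ℕ} {i j k : V} (hij : HasWalk E m i j) (hjk : HasWalk E s j k) :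
    HasWalk E (m + s) i k := by
  obtain ⟨p, hp, hp0, hpm⟩ := hij
  obtain ⟨q, hq, hq0, hqs⟩ := hjk
  refine ⟨fun t => if t < m then p t else q (t - m), fun t ht => ?_, ?_, by simp [hqs]⟩
  · rcases lt_trichotomy (t + 1) m with h | h | h
    · simpa [show t < m by omega, h] using hp t (by omega)
    · simpa [show t < m by omega, h, hpm, hq0] using hp t (by omega)
    · simp only [show ¬ t < m by omega, show ¬ t + 1 < m by omega, if_false]
      rw [show t + 1 - m = t - m + 1 by omega]
      exact hq _ (by omega)
  · rcases Nat.eq_zero_or_pos m with rfl | hm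
    · simp [hq0, ← hpm, hp0]
    · simp [hm, hp0]

lemma hasWalk_succ_iff {n : ℕ} {i j : V} :
    HasWalk E (n + 1) i j ↔ ∃ k, E i k ∧ HasWalk E n k j := by
  constructor
  · rintro ⟨p, hp, hp0, hpn⟩
    refine ⟨p 1, hp0 ▸ hp 0 (by omega), fun t => p (1 + t), ?_, rfl, ?_⟩
    · simpa using hp.drop 1
    · simpa [Nat.add_comm] using hpn
  · rintro ⟨k, hik, hkj⟩
    have hik' : HasWalk E 1 i k :=
      ⟨fun t => if t = 0 then i else k, fun t ht => by simpa [show t = 0 by omega] using hik,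
        rfl, rfl⟩
    simpa only [Nat.add_comm] using hik'.trans hkj

lemma HasWalk.exists_simpleWalk_modEq {c : ℕ} (hc : ∀ m ∈ ClosedLengths E, c ∣ m) {n : ℕ}
    {i j : V} (h : HasWalk E n i j) :
    ∃ s q, IsSimpleWalk E s q ∧ q 0 = i ∧ q s = j ∧ s ≤ n ∧ s ≡ n [MOD c] := by
  induction n using Nat.strong_induction_on generalizing i j with
  | _ n ih =>
  obtain ⟨p, hp, rfl, rfl⟩ := h
  by_cases hsimple : ∀ k l, k ≤ n → l ≤ n → p k = p l → k = l
  · exact ⟨n, p, ⟨hp, hsimple⟩, rfl, rfl, le_rfl, rfl⟩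
  obtain ⟨k, l, hkl, hl, hpkl⟩ : ∃ k l, k < l ∧ l ≤ n ∧ p k = p l := by
    push Not at hsimple
    obtain ⟨k, l, hk, hl, hpkl, hne⟩ := hsimple
    rcases hne.lt_or_gt with h | h
    exacts [⟨k, l, h, hl, hpkl⟩, ⟨l, k, h, hk, hpkl.symm⟩]
  have hloop : c ∣ l - k := hc _ ⟨by omega, _, (hp.drop k).mono (by omega), by
    simp [show k + (l - k) = l by omega, hpkl]⟩
  have hshort : HasWalk E (k + (n - l)) (p 0) (p n) :=
    HasWalk.trans ⟨p, hp.mono (by omega), rfl, rfl⟩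
      ⟨fun t => p (l + t), hp.drop l, hpkl.symm, by simp [show l + (n - l) = n by omega]⟩
  obtain ⟨s, q, hq, hq0, hqs, hs, hsmod⟩ := ih _ (by omega) hshort
  refine ⟨s, q, hq, hq0, hqs, by omega, hsmod.trans ?_⟩
  exact (Nat.modEq_iff_dvd' (by omega)).2 (by rwa [show n - (k + (n - l)) = l - k by omega])

lemma IsSimpleWalk.le_cabDiameter [Fintype V] {s : ℕ} {q : ℕ → V} (hq : IsSimpleWalk E s q) :
    s ≤ cabDiameter E := by
  refine le_csSup ⟨Fintype.card V, fun m ⟨p, _, hinj⟩ => ?_⟩ ⟨q, hq⟩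
  have := Fintype.card_le_of_injective (fun t : Fin (m + 1) => p t)
    fun a b hab => Fin.ext (hinj a b (by omega) (by omega) hab)
  simp only [Fintype.card_fin] at this
  omega

lemma HasWalk.of_modEq [Fintype V] {c ep m m' : ℕ} (hc : ∀ l ∈ ClosedLengths E, c ∣ l)
    (hep : ∀ i l, c ∣ l → ep ≤ l → HasClosedWalkAt E i l) {i j : V} (h : HasWalk E m i j)
    (hmod : m ≡ m' [MOD c]) (hm' : ep + cabDiameter E ≤ m') : HasWalk E m' i j := by
  obtain ⟨s, q, hq, hq0, hqs, hsm, hsmod⟩ := h.exists_simpleWalk_modEq hc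
  have hs := hq.le_cabDiameter
  have hpad : HasClosedWalkAt E i (m' - s) :=
    hep i _ ((Nat.modEq_iff_dvd' (by omega)).1 (hsmod.trans hmod)) (by omega)
  have hwalk := HasWalk.trans hpad ⟨q, hq.1, hq0, hqs⟩
  rwa [Nat.sub_add_cancel (by omega)] at hwalk

end Walks

lemma mpPow_ne_bot_iff_hasWalk {N : ℕ} (A : Matrix (Fin N) (Fin N) (WithBot ℝ)) (n : ℕ)
    (i j : Fin N) : mpPow A n i j ≠ ⊥ ↔ HasWalk (mEdge A) n i j := by
  induction n generalizing i with
  | zero =>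
    constructor
    · intro h
      have hij : i = j := by by_contra hij; simp [mpPow, hij] at h
      exact ⟨fun _ => i, fun k hk => absurd hk (Nat.not_lt_zero k), rfl, hij⟩
    · rintro ⟨p, -, rfl, rfl⟩
      simp [mpPow]
  | succ n ih =>
    simp only [mpPow, mpMul, hasWalk_succ_iff, ← ih, Ne, Finset.sup_eq_bot_iff,
      WithBot.add_eq_bot, Finset.mem_univ, true_implies, not_forall, not_or]
    rfl

theorem stmt_16_general {N : ℕ} (A : Matrix (Fin N) (Fin N) (WithBot ℝ))
    (c ep : ℕ) (hc : IsGcdOf c (ClosedLengths (mEdge A))) (hep : IsEp (mEdge A) c ep)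
    (i j : Fin N) (n : ℕ) (hn : ep + c + cabDiameter (mEdge A) ≤ n + 1) :
    ((∃ p, IsWalk (mEdge A) (n + c) p ∧ p 0 = i ∧ p (n + c) = j) ↔
      (∃ p, IsWalk (mEdge A) n p ∧ p 0 = i ∧ p n = j)) ∧
    (mpPow A (n + c) i j = ⊥ ↔ mpPow A n i j = ⊥) := by
  have hwalk : HasWalk (mEdge A) (n + c) i j ↔ HasWalk (mEdge A) n i j := by
    rcases Nat.eq_zero_or_pos c with rfl | hcpos
    · rfl
    have hshift : n + c ≡ n [MOD c] := Nat.add_modEq_left_iff.2 dvd_rfl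
    exact ⟨fun h => h.of_modEq hc.1 hep.1 hshift (by omega),
      fun h => h.of_modEq hc.1 hep.1 hshift.symm (by omega)⟩
  refine ⟨hwalk, ?_⟩
  rw [← not_iff_not, ← ne_eq, ← ne_eq, mpPow_ne_bot_iff_hasWalk, mpPow_ne_bot_iff_hasWalk]
  exact hwalk

/-- For an irreducible max-plus matrix `A` with `G = G(A)` and every
`n ≥ ep(G) + c(G) + cd(G) − 1`: there is a path of length `n + c(G)` from `i` to `j`
iff there is one of length `n`; equivalently `A^{⊗(n+c)}_{i,j} = −∞ ↔ A^{⊗n}_{i,j} = −∞`. -/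
theorem stmt_16 {N : ℕ} (A : Matrix (Fin N) (Fin N) (WithBot ℝ)) (hA : MPIrreducible A)
    (c ep : ℕ) (hc : IsGcdOf c (ClosedLengths (mEdge A))) (hep : IsEp (mEdge A) c ep)
    (i j : Fin N) (n : ℕ) (hn : ep + c + cabDiameter (mEdge A) ≤ n + 1) :
    ((∃ p, IsWalk (mEdge A) (n + c) p ∧ p 0 = i ∧ p (n + c) = j) ↔
      (∃ p, IsWalk (mEdge A) n p ∧ p 0 = i ∧ p n = j)) ∧
    (mpPow A (n + c) i j = ⊥ ↔ mpPow A n i j = ⊥) :=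
  stmt_16_general A c ep hc hep i j n hn

end Transients
end

section
/- Let A be an irreducible N×N max-plus matrix and write G = G(A). Define B_ms(G) = 2·cd(G) + ep(G) + max_{H a critical component of G} c(H) + max_{H a critical component of G} ep(H) − 1, and define μ(A) = sup{ A^{⊗n}_{i,k} − A^{⊗n}_{i,j} : i, j, k nodes of G, n ≥ B_ms(G), A^{⊗n}_{i,j} ≠ −∞ }. Then μ(A) ≤ (Δ(G) − ρ(G))·cd(G) + (ρ(G) − δ(G))·(2·cd(G) + ep(G) + max_{H a critical component of G} c(H) − 1). -/
/-!
Every walk splits into closed walks, each of mean weight at most `ρ`, and a simple walk of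
length at most `cd`; so every finite entry satisfies `A^{⊗n}_{i,k} ≤ nρ + (Δ - ρ)·cd`.

For the lower bound on `A^{⊗n}_{i,j}`, take a critical node `k` whose critical component `H`
has the largest exploration penalty, and reroute a walk `i → j` of length `n` as: a simple walk
`i → k`, a closed walk at `k` of length `s` with `ep(G) ≤ s < ep(G) + c(H)`, a closed walk of
length a multiple of `c(H)` in `H`, and a simple walk `k → j`. All walks `i → j` have lengths
congruent modulo `c(G)`, and `c(G)` divides `c(H)`, so `s` can be chosen to make the total
length `n`. Critical edges are tight for a potential, so the walk in `H` has weight exactly `ρ`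
times its length, while the remaining `L ≤ 2·cd + ep(G) + c(H) - 1` edges weigh at least `δ`
each: `A^{⊗n}_{i,j} ≥ nρ - (ρ - δ)·L`.
-/

namespace Transients

variable {V : Type*}

/-- The set of real differences `A^{⊗n}_{i,k} − A^{⊗n}_{i,j}` over all nodes `i,j,k`
and all `n ≥ B − 1` (stated as `B ≤ n + 1`) with `A^{⊗n}_{i,j} ≠ −∞` (the entries
with `A^{⊗n}_{i,k} = −∞` contribute `−∞` and are irrelevant for the supremum);
`μ(A)` is its supremum. -/
def muSet {N : ℕ} (A : Matrix (Fin N) (Fin N) (WithBot ℝ)) (B : ℕ) : Set ℝ :=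
  {x : ℝ | ∃ (i j k : Fin N) (n : ℕ), B ≤ n + 1 ∧ ∃ a b : ℝ,
    mpPow A n i k = (a : WithBot ℝ) ∧ mpPow A n i j = (b : WithBot ℝ) ∧ x = a - b}

section Walks

variable {E : V → V → Prop} {w : V → V → ℝ}

lemma IsWalk.of_le {n m : ℕ} {p : ℕ → V} (h : IsWalk E n p) (hm : m ≤ n) : IsWalk E m p :=
  fun k hk => h k (hk.trans_le hm)

lemma IsWalk.shift {n m : ℕ} {p : ℕ → V} (h : IsWalk E (n + m) p) :
    IsWalk E m (fun t => p (n + t)) :=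
  fun k hk => by simpa [Nat.add_assoc] using h (n + k) (by omega)

lemma walkWeight_add (n m : ℕ) (p : ℕ → V) :
    walkWeight w (n + m) p = walkWeight w n p + walkWeight w m (fun t => p (n + t)) := by
  simp only [walkWeight, Finset.sum_range_add, Nat.add_assoc]

lemma walkWeight_succ (n : ℕ) (p : ℕ → V) :
    walkWeight w (n + 1) p = w (p 0) (p 1) + walkWeight w n (fun t => p (t + 1)) := by
  rw [walkWeight, Finset.sum_range_succ', add_comm]
  rfl

lemma walkWeight_le_mul {Δ : ℝ} (hΔ : ∀ i j, E i j → w i j ≤ Δ) {n : ℕ} {p : ℕ → V}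
    (hp : IsWalk E n p) : walkWeight w n p ≤ Δ * n := by
  simpa [walkWeight, mul_comm] using
    Finset.sum_le_sum fun t ht => hΔ _ _ (hp t (Finset.mem_range.mp ht))

lemma mul_le_walkWeight {δ : ℝ} (hδ : ∀ i j, E i j → δ ≤ w i j) {n : ℕ} {p : ℕ → V}
    (hp : IsWalk E n p) : δ * n ≤ walkWeight w n p := by
  simpa [walkWeight, mul_comm] using
    Finset.sum_le_sum fun t ht => hδ _ _ (hp t (Finset.mem_range.mp ht))

def wappend (m : ℕ) (p q : ℕ → V) : ℕ → V := fun t => if t ≤ m then p t else q (t - m)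

lemma wappend_of_le {m t : ℕ} {p q : ℕ → V} (ht : t ≤ m) : wappend m p q t = p t := if_pos ht

lemma wappend_add {m : ℕ} {p q : ℕ → V} (hpq : p m = q 0) (t : ℕ) :
    wappend m p q (m + t) = q t := by
  rcases t.eq_zero_or_pos with rfl | ht
  · simpa [wappend] using hpq
  · simp [wappend, show ¬ m + t ≤ m by omega]

lemma IsWalk.append {m s : ℕ} {p q : ℕ → V} (hp : IsWalk E m p) (hq : IsWalk E s q)
    (hpq : p m = q 0) : IsWalk E (m + s) (wappend m p q) := by
  intro k hk
  rcases lt_or_ge k m with hkm | hkm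
  · rw [wappend_of_le hkm.le, wappend_of_le hkm]
    exact hp k hkm
  · obtain ⟨t, rfl⟩ := Nat.exists_eq_add_of_le hkm
    rw [Nat.add_assoc, wappend_add hpq, wappend_add hpq]
    exact hq t (by omega)

lemma walkWeight_wappend {m s : ℕ} {p q : ℕ → V} (hpq : p m = q 0) :
    walkWeight w (m + s) (wappend m p q) = walkWeight w m p + walkWeight w s q := by
  rw [walkWeight_add]
  congr 1
  · refine Finset.sum_congr rfl fun t ht => ?_
    rw [wappend_of_le (Finset.mem_range.mp ht).le, wappend_of_le (Finset.mem_range.mp ht)]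
  · simp only [walkWeight, wappend_add hpq]

def wcons (i : V) (p : ℕ → V) : ℕ → V := fun t => if t = 0 then i else p (t - 1)

lemma IsWalk.cons {n : ℕ} {i : V} {p : ℕ → V} (hi : E i (p 0)) (hp : IsWalk E n p) :
    IsWalk E (n + 1) (wcons i p)
  | 0, _ => hi
  | t + 1, ht => hp t (by omega)

lemma walkWeight_wcons (n : ℕ) (i : V) (p : ℕ → V) :
    walkWeight w (n + 1) (wcons i p) = w i (p 0) + walkWeight w n p :=
  walkWeight_succ n _

lemma IsClosedWalk.rotate {n k : ℕ} {p : ℕ → V} (hp : IsClosedWalk E n p) (hk : k ≤ n) :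
    ∃ q, IsWalk E n q ∧ q 0 = p k ∧ q n = p k := by
  obtain ⟨d, rfl⟩ := Nat.exists_eq_add_of_le hk
  have hend : p (k + d) = p 0 := hp.2.symm
  refine ⟨wappend d (fun t => p (k + t)) p, ?_, by simp [wappend_of_le], ?_⟩
  · rw [Nat.add_comm k d]
    exact hp.1.shift.append (hp.1.of_le (by omega)) hend
  · rw [Nat.add_comm k d]
    exact wappend_add (p := fun t => p (k + t)) hend k

lemma exists_isClosedWalk (hSC : StronglyConnected E) (hne : NontrivialGraph E) :
    ∃ n p, 0 < n ∧ IsClosedWalk E n p := by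
  obtain ⟨i, j, hij⟩ := hne
  obtain ⟨n, p, hp, rfl, hpn⟩ := hSC j i
  exact ⟨n + 1, wcons i p, n.succ_pos, hp.cons hij, hpn.symm⟩

end Walks

section LoopRemoval

variable {E : V → V → Prop} {w : V → V → ℝ}

lemma IsWalk.exists_loop_of_not_simple {n : ℕ} {p : ℕ → V} (hp : IsWalk E n p)
    (hs : ¬ IsSimpleWalk E n p) : ∃ k d e, 0 < d ∧ k + d + e = n ∧ p k = p (k + d) := by
  by_contra! hrep
  refine hs ⟨hp, fun k l hk hl hkl => ?_⟩
  rcases lt_trichotomy k l with h | h | h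
  · exact (hrep k (l - k) (n - l) (by omega) (by omega)
      (by rwa [Nat.add_sub_cancel' h.le])).elim
  · exact h
  · exact (hrep l (k - l) (n - k) (by omega) (by omega)
      (by rw [Nat.add_sub_cancel' h.le, hkl])).elim

lemma IsWalk.exists_shortcut {k d e : ℕ} {p : ℕ → V} (hp : IsWalk E (k + d + e) p)
    (hloop : p k = p (k + d)) :
    ∃ q, IsWalk E (k + e) q ∧ q 0 = p 0 ∧ q (k + e) = p (k + d + e) ∧
      walkWeight w (k + d + e) p =
        walkWeight w (k + e) q + walkWeight w d (fun t => p (k + t)) := by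
  have hjoin : p k = (fun t => p (k + d + t)) 0 := hloop
  refine ⟨wappend k p fun t => p (k + d + t), (hp.of_le (by omega)).append hp.shift hjoin,
    wappend_of_le k.zero_le, wappend_add hjoin e, ?_⟩
  rw [walkWeight_wappend hjoin, walkWeight_add (k + d), walkWeight_add k]
  ring

lemma IsWalk.isClosedWalk_loop {k d e : ℕ} {p : ℕ → V} (hp : IsWalk E (k + d + e) p)
    (hloop : p k = p (k + d)) : IsClosedWalk E d (fun t => p (k + t)) :=
  ⟨(hp.of_le (by omega)).shift, hloop⟩

lemma IsWalk.exists_isSimpleWalk (n : ℕ) :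
    ∀ {p : ℕ → V}, IsWalk E n p → ∃ m q, IsSimpleWalk E m q ∧ q 0 = p 0 ∧ q m = p n := by
  induction n using Nat.strong_induction_on with
  | _ n ih =>
    intro p hp
    by_cases hs : IsSimpleWalk E n p
    · exact ⟨n, p, hs, rfl, rfl⟩
    obtain ⟨k, d, e, hd, rfl, hloop⟩ := hp.exists_loop_of_not_simple hs
    obtain ⟨q, hq, hq0, hqn, -⟩ := hp.exists_shortcut (w := 0) hloop
    obtain ⟨m, r, hr, hr0, hrm⟩ := ih (k + e) (by omega) hq
    exact ⟨m, r, hr, hr0.trans hq0, hrm.trans hqn⟩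

/-- Removing loops one at a time, a walk splits into closed walks, each of mean weight at
most `ρ`, and a simple walk, of length at most `C`. -/
lemma walkWeight_le_of_closed {ρ Δ C : ℝ}
    (hclosed : ∀ n p, 0 < n → IsClosedWalk E n p → walkWeight w n p ≤ ρ * n)
    (hΔ : ∀ i j, E i j → w i j ≤ Δ) (hρΔ : ρ ≤ Δ)
    (hC : ∀ m q, IsSimpleWalk E m q → (m : ℝ) ≤ C) (n : ℕ) :
    ∀ {p : ℕ → V}, IsWalk E n p → walkWeight w n p ≤ ρ * n + (Δ - ρ) * C := by
  induction n using Nat.strong_induction_on with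
  | _ n ih =>
    intro p hp
    by_cases hs : IsSimpleWalk E n p
    · have := walkWeight_le_mul hΔ hp
      nlinarith [hC n p hs]
    obtain ⟨k, d, e, hd, rfl, hloop⟩ := hp.exists_loop_of_not_simple hs
    obtain ⟨q, hq, -, -, hweight⟩ := hp.exists_shortcut (w := w) hloop
    have hq := ih (k + e) (by omega) hq
    have hl := hclosed d _ hd (hp.isClosedWalk_loop hloop)
    rw [hweight]
    push_cast at hq ⊢
    linarith

end LoopRemoval

section FiniteGraph

variable [Fintype V] {E : V → V → Prop} {w : V → V → ℝ}

lemma finite_edgeWeights : {x : ℝ | ∃ i j, E i j ∧ x = w i j}.Finite :=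
  (Set.finite_range fun ij : V × V => w ij.1 ij.2).subset <| by
    rintro x ⟨i, j, -, rfl⟩
    exact ⟨(i, j), rfl⟩

lemma le_maxWeight {i j : V} (h : E i j) : w i j ≤ maxWeight E w :=
  le_csSup finite_edgeWeights.bddAbove ⟨i, j, h, rfl⟩

lemma minWeight_le {i j : V} (h : E i j) : minWeight E w ≤ w i j :=
  csInf_le finite_edgeWeights.bddBelow ⟨i, j, h, rfl⟩

lemma maxWeight_mem_upperBounds :
    maxWeight E w ∈ upperBounds {x : ℝ | ∃ n p, 0 < n ∧ IsClosedWalk E n p ∧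
      x = walkWeight w n p / n} := by
  rintro x ⟨n, p, hn, hp, rfl⟩
  rw [div_le_iff₀ (by positivity)]
  exact walkWeight_le_mul (fun _ _ => le_maxWeight) hp.1

lemma walkWeight_le_rate_mul {n : ℕ} {p : ℕ → V} (hn : 0 < n) (hp : IsClosedWalk E n p) :
    walkWeight w n p ≤ rate E w * n :=
  (div_le_iff₀ (by positivity)).mp (le_csSup ⟨_, maxWeight_mem_upperBounds⟩ ⟨n, p, hn, hp, rfl⟩)

lemma rate_le_maxWeight (hSC : StronglyConnected E) (hne : NontrivialGraph E) :
    rate E w ≤ maxWeight E w := by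
  obtain ⟨n, p, hn, hp⟩ := exists_isClosedWalk hSC hne
  exact csSup_le ⟨_, n, p, hn, hp, rfl⟩ maxWeight_mem_upperBounds

lemma minWeight_le_rate (hSC : StronglyConnected E) (hne : NontrivialGraph E) :
    minWeight E w ≤ rate E w := by
  obtain ⟨n, p, hn, hp⟩ := exists_isClosedWalk hSC hne
  calc minWeight E w ≤ walkWeight w n p / n :=
        (le_div_iff₀ (by positivity)).mpr (mul_le_walkWeight (fun _ _ => minWeight_le) hp.1)
    _ ≤ rate E w := le_csSup ⟨_, maxWeight_mem_upperBounds⟩ ⟨n, p, hn, hp, rfl⟩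

lemma IsSimpleWalk.le_cabDiameter_s17 {n : ℕ} {p : ℕ → V} (h : IsSimpleWalk E n p) :
    n ≤ cabDiameter E := by
  refine le_csSup ⟨Fintype.card V, ?_⟩ ⟨p, h⟩
  rintro m ⟨q, hq⟩
  have hinj : Function.Injective fun t : Fin (m + 1) => q t :=
    fun a b hab => Fin.ext (hq.2 a b (by omega) (by omega) hab)
  have := Fintype.card_le_of_injective _ hinj
  simp only [Fintype.card_fin] at this
  omega

lemma walkWeight_le_rate_mul_add (hSC : StronglyConnected E) (hne : NontrivialGraph E)
    {n : ℕ} {p : ℕ → V} (hp : IsWalk E n p) :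
    walkWeight w n p ≤ rate E w * n + (maxWeight E w - rate E w) * cabDiameter E :=
  walkWeight_le_of_closed (fun _ _ => walkWeight_le_rate_mul) (fun _ _ => le_maxWeight)
    (rate_le_maxWeight hSC hne) (fun _ _ hq => by exact_mod_cast hq.le_cabDiameter_s17) n hp

lemma exists_walk_le_cabDiameter (hSC : StronglyConnected E) (i j : V) :
    ∃ l p, IsWalk E l p ∧ p 0 = i ∧ p l = j ∧ l ≤ cabDiameter E := by
  obtain ⟨n, p, hp, rfl, rfl⟩ := hSC i j
  obtain ⟨l, q, hq, hq0, hql⟩ := hp.exists_isSimpleWalk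
  exact ⟨l, q, hq.1, hq0, hql, hq.le_cabDiameter_s17⟩

end FiniteGraph

section Critical

variable {E : V → V → Prop} {w : V → V → ℝ}

lemma CriticalEdge.edge {i j : V} (h : CriticalEdge E w i j) : E i j := by
  obtain ⟨n, p, k, ⟨-, ⟨hp, -⟩, -⟩, hk, rfl, rfl⟩ := h
  exact hp k hk

/-- The potential is the largest value of `w_*(π) - ρ ℓ(π)` over walks `π` from `i` to a
fixed node; it is finite because every such value is at most `(Δ - ρ) cd`. -/
lemma exists_potential [Fintype V] (hSC : StronglyConnected E) (hne : NontrivialGraph E) :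
    ∃ π : V → ℝ, ∀ i j, E i j → w i j - rate E w + π j ≤ π i := by
  have ⟨v₀, _⟩ := hne
  set S : V → Set ℝ := fun i =>
    {x | ∃ n p, IsWalk E n p ∧ p 0 = i ∧ p n = v₀ ∧ x = walkWeight w n p - rate E w * n}
  have hbdd : ∀ i, BddAbove (S i) := fun i => by
    refine ⟨(maxWeight E w - rate E w) * cabDiameter E, ?_⟩
    rintro _ ⟨n, p, hp, -, -, rfl⟩
    linarith [walkWeight_le_rate_mul_add (w := w) hSC hne hp]
  refine ⟨fun i => sSup (S i), fun i j hij => ?_⟩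
  obtain ⟨n₀, p₀, hp₀, hp₀0, hp₀n⟩ := hSC j v₀
  suffices sSup (S j) ≤ sSup (S i) - (w i j - rate E w) by linarith
  refine csSup_le ⟨_, n₀, p₀, hp₀, hp₀0, hp₀n, rfl⟩ ?_
  rintro _ ⟨n, p, hp, rfl, hpn, rfl⟩
  have hmem : walkWeight w (n + 1) (wcons i p) - rate E w * (n + 1 : ℕ) ∈ S i :=
    ⟨n + 1, wcons i p, hp.cons hij, rfl, hpn, rfl⟩
  have := le_csSup (hbdd i) hmem
  rw [walkWeight_wcons] at this
  push_cast at this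
  linarith

/-- Along a critical closed walk the inequalities of the potential add up to an equality,
so each of them is an equality. -/
lemma CriticalEdge.potential_eq {π : V → ℝ} (hπ : ∀ i j, E i j → w i j - rate E w + π j ≤ π i)
    {i j : V} (h : CriticalEdge E w i j) : w i j - rate E w + π j = π i := by
  obtain ⟨n, p, k, ⟨-, ⟨hp, hclosed⟩, hweight⟩, hk, rfl, rfl⟩ := h
  have hle : ∀ t ∈ Finset.range n,
      w (p t) (p (t + 1)) - rate E w ≤ π (p t) - π (p (t + 1)) := fun t ht => by
    linarith [hπ _ _ (hp t (Finset.mem_range.mp ht))]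
  have hsum : ∑ t ∈ Finset.range n, (w (p t) (p (t + 1)) - rate E w)
      = ∑ t ∈ Finset.range n, (π (p t) - π (p (t + 1))) := by
    rw [Finset.sum_sub_distrib, Finset.sum_range_sub', ← hclosed, sub_self]
    simp only [walkWeight] at hweight
    simp [hweight, mul_comm]
  linarith [(Finset.sum_eq_sum_iff_of_le hle).mp hsum k (Finset.mem_range.mpr hk)]

lemma walkWeight_eq_rate_mul_of_critical [Fintype V] (hSC : StronglyConnected E)
    (hne : NontrivialGraph E) {m : ℕ} {q : ℕ → V} (hq : IsWalk (CriticalEdge E w) m q)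
    (hclosed : q 0 = q m) : walkWeight w m q = rate E w * m := by
  obtain ⟨π, hπ⟩ := exists_potential (w := w) hSC hne
  have hedge : ∀ t ∈ Finset.range m,
      w (q t) (q (t + 1)) = rate E w + (π (q t) - π (q (t + 1))) := fun t ht => by
    linarith [(hq t (Finset.mem_range.mp ht)).potential_eq hπ]
  rw [walkWeight, Finset.sum_congr rfl hedge, Finset.sum_add_distrib, Finset.sum_range_sub',
    hclosed]
  simp [mul_comm]

lemma CriticalNode.closedLengthsAt_nonempty {i : V} (h : CriticalNode E w i) :
    (ClosedLengthsAt (CriticalEdge E w) i).Nonempty := by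
  obtain ⟨n, p, k, hcrit, hk, rfl⟩ := h
  have hp : IsClosedWalk (CriticalEdge E w) n p :=
    ⟨fun t ht => ⟨n, p, t, hcrit, ht, rfl, rfl⟩, hcrit.2.1.2⟩
  obtain ⟨q, hq, hq0, hqn⟩ := hp.rotate hk
  exact ⟨n, hcrit.1, q, hq, hq0, hqn⟩

end Critical

section Lengths

lemma IsGcdOf.pos_of_mem {d s : ℕ} {S : Set ℕ} (h : IsGcdOf d S) (hs : s ∈ S) (hs0 : 0 < s) :
    0 < d :=
  Nat.pos_of_ne_zero fun hd => hs0.ne' (Nat.eq_zero_of_zero_dvd (hd ▸ h.1 s hs))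

lemma IsGcdOf.dvd_of_subset {d e : ℕ} {S T : Set ℕ} (hT : IsGcdOf d T) (hS : IsGcdOf e S)
    (hST : S ⊆ T) : d ∣ e :=
  hS.2 d fun s hs => hT.1 s (hST hs)

lemma exists_add_eq_of_dvd {g c e m r : ℕ} (hc : 0 < c) (hgc : g ∣ c) (hgr : g ∣ r)
    (hr : e + c + m ≤ r + 1) :
    ∃ s t, s + t = r ∧ g ∣ s ∧ e ≤ s ∧ s < e + c ∧ c ∣ t ∧ m ≤ t := by
  have hdiv := Nat.mod_add_div' (r - e) c
  have hmod := Nat.mod_lt (r - e) hc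
  have hsum : e + (r - e) % c + (r - e) / c * c = r := by omega
  have hgt : g ∣ (r - e) / c * c := hgc.mul_left _
  refine ⟨e + (r - e) % c, (r - e) / c * c, hsum, ?_, by omega, by omega,
    dvd_mul_left _ _, by omega⟩
  exact (Nat.dvd_add_left hgt).mp (by rwa [hsum])

variable {E : V → V → Prop}

lemma closedLengthsAt_subset {E' : V → V → Prop} (hE : ∀ i j, E' i j → E i j) (k : V) :
    ClosedLengthsAt E' k ⊆ ClosedLengths E := by
  rintro n ⟨hn, p, hp, hp0, hpn⟩
  exact ⟨hn, p, fun t ht => hE _ _ (hp t ht), hp0.trans hpn.symm⟩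

lemma IsGcdOf.dvd_of_isClosedWalk {cG n : ℕ} {p : ℕ → V} (hcG : IsGcdOf cG (ClosedLengths E))
    (hp : IsClosedWalk E n p) : cG ∣ n := by
  rcases n.eq_zero_or_pos with rfl | hn
  · exact dvd_zero cG
  · exact hcG.1 n ⟨hn, p, hp⟩

/-- Two walks with common endpoints, closed up by one walk back, give two closed walks. -/
lemma IsGcdOf.modEq_of_isWalk {cG a b : ℕ} {p q : ℕ → V} (hSC : StronglyConnected E)
    (hcG : IsGcdOf cG (ClosedLengths E)) (hp : IsWalk E a p) (hq : IsWalk E b q)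
    (h0 : p 0 = q 0) (hend : p a = q b) : a ≡ b [MOD cG] := by
  obtain ⟨t, r, hr, hr0, hrt⟩ := hSC (p a) (p 0)
  have hpr := hcG.dvd_of_isClosedWalk ⟨hp.append hr hr0.symm, by
    rw [wappend_of_le a.zero_le, wappend_add hr0.symm, hrt]⟩
  have hqr := hcG.dvd_of_isClosedWalk ⟨hq.append hr (hend ▸ hr0.symm), by
    rw [wappend_of_le b.zero_le, wappend_add (hend ▸ hr0.symm), hrt, h0]⟩
  exact Nat.ModEq.add_right_cancel' t
    ((Nat.modEq_zero_iff_dvd.mpr hpr).trans (Nat.modEq_zero_iff_dvd.mpr hqr).symm)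

end Lengths

section HeavyWalks

variable {E : V → V → Prop} {w : V → V → ℝ}

def HasWalkWeightGE (E : V → V → Prop) (w : V → V → ℝ) (n : ℕ) (i j : V) (x : ℝ) : Prop :=
  ∃ p, IsWalk E n p ∧ p 0 = i ∧ p n = j ∧ x ≤ walkWeight w n p

lemma HasWalkWeightGE.mono {n : ℕ} {i j : V} {x y : ℝ} (h : HasWalkWeightGE E w n i j x)
    (hyx : y ≤ x) : HasWalkWeightGE E w n i j y :=
  let ⟨p, hp, hp0, hpn, hx⟩ := h
  ⟨p, hp, hp0, hpn, hyx.trans hx⟩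

lemma HasWalkWeightGE.append {m s : ℕ} {i j k : V} {x y : ℝ}
    (h₁ : HasWalkWeightGE E w m i j x) (h₂ : HasWalkWeightGE E w s j k y) :
    HasWalkWeightGE E w (m + s) i k (x + y) := by
  obtain ⟨p, hp, rfl, hpm, hx⟩ := h₁
  obtain ⟨q, hq, hq0, rfl, hy⟩ := h₂
  have hpq : p m = q 0 := hpm.trans hq0.symm
  refine ⟨wappend m p q, hp.append hq hpq, wappend_of_le m.zero_le, wappend_add hpq s, ?_⟩
  rw [walkWeight_wappend hpq]
  exact add_le_add hx hy

lemma IsWalk.hasWalkWeightGE_minWeight [Fintype V] {n : ℕ} {p : ℕ → V} (hp : IsWalk E n p) :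
    HasWalkWeightGE E w n (p 0) (p n) (minWeight E w * n) :=
  ⟨p, hp, rfl, rfl, mul_le_walkWeight (fun _ _ => minWeight_le) hp⟩

lemma IsEp.hasWalkWeightGE [Fintype V] {c ep n : ℕ} (h : IsEp E c ep) (k : V) (hcn : c ∣ n)
    (hn : ep ≤ n) : HasWalkWeightGE E w n k k (minWeight E w * n) := by
  obtain ⟨p, hp, hp0, hpn⟩ := h.1 k n hcn hn
  simpa only [hp0, hpn] using hp.hasWalkWeightGE_minWeight

lemma IsCompEp.hasWalkWeightGE [Fintype V] (hSC : StronglyConnected E) (hne : NontrivialGraph E)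
    {k : V} {c m n : ℕ} (h : IsCompEp (CriticalEdge E w) k c m) (hcn : c ∣ n) (hn : m ≤ n) :
    HasWalkWeightGE E w n k k (rate E w * n) := by
  have hrefl : SameComp (CriticalEdge E w) k k :=
    ⟨⟨0, fun _ => k, nofun, rfl, rfl⟩, ⟨0, fun _ => k, nofun, rfl, rfl⟩⟩
  obtain ⟨p, hp, hp0, hpn⟩ := h.1 k hrefl n hcn hn
  exact ⟨p, fun t ht => (hp t ht).edge, hp0, hpn,
    (walkWeight_eq_rate_mul_of_critical hSC hne hp (hp0.trans hpn.symm)).ge⟩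

lemma exists_hasWalkWeightGE_via_critical [Fintype V] (hSC : StronglyConnected E)
    (hne : NontrivialGraph E) {cG epG : ℕ} (hcG : IsGcdOf cG (ClosedLengths E))
    (hepG : IsEp E cG epG) {k : V} {c m : ℕ} (hk : CriticalNode E w k)
    (hc : IsGcdOf c (ClosedLengthsAt (CriticalEdge E w) k))
    (hm : IsCompEp (CriticalEdge E w) k c m) {n : ℕ} {p : ℕ → V} (hp : IsWalk E n p)
    (hn : 2 * cabDiameter E + epG + c + m ≤ n + 1) :
    ∃ L : ℕ, L + 1 ≤ 2 * cabDiameter E + epG + c ∧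
      HasWalkWeightGE E w n (p 0) (p n) (rate E w * n - (rate E w - minWeight E w) * L) := by
  obtain ⟨l₁, p₁, hp₁, hp₁0, hp₁l, hl₁⟩ := exists_walk_le_cabDiameter hSC (p 0) k
  obtain ⟨l₂, p₂, hp₂, hp₂0, hp₂l, hl₂⟩ := exists_walk_le_cabDiameter hSC k (p n)
  obtain ⟨c₀, hc₀⟩ := hk.closedLengthsAt_nonempty
  have hc_pos : 0 < c := hc.pos_of_mem hc₀ hc₀.1
  have hcG_dvd : cG ∣ c := hcG.dvd_of_subset hc (closedLengthsAt_subset (fun _ _ h => h.edge) k)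
  have hp₁₂ : p₁ l₁ = p₂ 0 := hp₁l.trans hp₂0.symm
  have hmod : n ≡ l₁ + l₂ [MOD cG] := hcG.modEq_of_isWalk hSC hp (hp₁.append hp₂ hp₁₂)
    (by rw [wappend_of_le l₁.zero_le, hp₁0]) (by rw [wappend_add hp₁₂, hp₂l])
  obtain ⟨s, t, hst, hcG_s, hs, hsc, hct, hmt⟩ :=
    exists_add_eq_of_dvd (e := epG) (m := m) hc_pos hcG_dvd
    ((Nat.modEq_iff_dvd' (by omega)).mp hmod.symm) (by omega)
  have hwalk := (hp₁0 ▸ hp₁l ▸ hp₁.hasWalkWeightGE_minWeight (w := w)).append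
    ((hm.hasWalkWeightGE hSC hne hct hmt).append ((hepG.hasWalkWeightGE k hcG_s hs).append
      (hp₂0 ▸ hp₂l ▸ hp₂.hasWalkWeightGE_minWeight)))
  rw [show l₁ + (t + (s + l₂)) = n by omega] at hwalk
  refine ⟨l₁ + s + l₂, by omega, hwalk.mono (le_of_eq ?_)⟩
  have hn' : (n : ℝ) = l₁ + t + s + l₂ := by exact_mod_cast (show n = l₁ + t + s + l₂ by omega)
  rw [hn']
  push_cast
  ring

end HeavyWalks

section MaxPlus

variable {N : ℕ} {A : Matrix (Fin N) (Fin N) (WithBot ℝ)}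

lemma coe_mWeight {i j : Fin N} (h : mEdge A i j) : (mWeight A i j : WithBot ℝ) = A i j := by
  obtain ⟨x, hx⟩ := WithBot.ne_bot_iff_exists.mp h
  simp [mWeight, ← hx]

lemma walkWeight_le_mpPow (n : ℕ) : ∀ {p : ℕ → Fin N}, IsWalk (mEdge A) n p →
    (walkWeight (mWeight A) n p : WithBot ℝ) ≤ mpPow A n (p 0) (p n) := by
  induction n with
  | zero => intro p _; simp [mpPow, walkWeight]
  | succ n ih =>
    intro p hp
    calc (walkWeight (mWeight A) (n + 1) p : WithBot ℝ)
        = A (p 0) (p 1) + (walkWeight (mWeight A) n (fun t => p (t + 1)) : WithBot ℝ) := by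
          rw [walkWeight_succ, WithBot.coe_add, coe_mWeight (hp 0 n.succ_pos)]
      _ ≤ A (p 0) (p 1) + mpPow A n (p 1) (p (n + 1)) := by
          gcongr
          exact ih fun t ht => hp (t + 1) (by omega)
      _ ≤ mpPow A (n + 1) (p 0) (p (n + 1)) :=
          Finset.le_sup (f := fun k => A (p 0) k + mpPow A n k (p (n + 1))) (Finset.mem_univ _)

lemma HasWalkWeightGE.coe_le_mpPow {n : ℕ} {i j : Fin N} {x : ℝ}
    (h : HasWalkWeightGE (mEdge A) (mWeight A) n i j x) : (x : WithBot ℝ) ≤ mpPow A n i j := by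
  obtain ⟨p, hp, rfl, rfl, hx⟩ := h
  exact (WithBot.coe_le_coe.mpr hx).trans (walkWeight_le_mpPow n hp)

lemma exists_walk_of_mpPow_eq_coe (n : ℕ) : ∀ {i j : Fin N} {x : ℝ}, mpPow A n i j = x →
    ∃ p, IsWalk (mEdge A) n p ∧ p 0 = i ∧ p n = j ∧ walkWeight (mWeight A) n p = x := by
  induction n with
  | zero =>
    intro i j x h
    by_cases hij : i = j
    · subst hij
      refine ⟨fun _ => i, nofun, rfl, rfl, ?_⟩
      simpa [mpPow, walkWeight, eq_comm] using h
    · simp [mpPow, hij] at h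
  | succ n ih =>
    intro i j x h
    obtain ⟨k, -, hk⟩ := Finset.exists_mem_eq_sup Finset.univ ⟨i, Finset.mem_univ i⟩
      fun k => A i k + mpPow A n k j
    obtain ⟨a, y, ha, hy, hay⟩ := WithBot.add_eq_coe.mp (hk.symm.trans h)
    obtain ⟨q, hq, rfl, rfl, hqy⟩ := ih hy.symm
    have hedge : mEdge A i (q 0) := by simp [mEdge, ← ha]
    have hwa : mWeight A i (q 0) = a := by simp [mWeight, ← ha]
    refine ⟨wcons i q, hq.cons hedge, rfl, rfl, ?_⟩
    rw [walkWeight_wcons, hqy, hwa, hay]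

end MaxPlus

/-- With `B_ms(G) = 2·cd(G) + ep(G) + max_H c(H) + max_H ep(H) − 1`,
every element of the set defining `μ(A)` is at most
`(Δ − ρ)·cd + (ρ − δ)·(2·cd + ep(G) + max_H c(H) − 1)`. -/
theorem stmt_17 {N : ℕ} (A : Matrix (Fin N) (Fin N) (WithBot ℝ)) (hA : MPIrreducible A)
    (cG epG : ℕ) (hcG : IsGcdOf cG (ClosedLengths (mEdge A)))
    (hepG : IsEp (mEdge A) cG epG)
    (dmax : ℕ)
    (hdmax : IsGreatest {c : ℕ | ∃ k : Fin N, CriticalNode (mEdge A) (mWeight A) k ∧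
      IsGcdOf c (ClosedLengthsAt (CriticalEdge (mEdge A) (mWeight A)) k)} dmax)
    (epmax : ℕ)
    (hepmax : IsGreatest {m : ℕ | ∃ (k : Fin N) (c : ℕ),
      CriticalNode (mEdge A) (mWeight A) k ∧
      IsGcdOf c (ClosedLengthsAt (CriticalEdge (mEdge A) (mWeight A)) k) ∧
      IsCompEp (CriticalEdge (mEdge A) (mWeight A)) k c m} epmax) :
    ∀ x ∈ muSet A (2 * cabDiameter (mEdge A) + epG + dmax + epmax),
      x ≤ (maxWeight (mEdge A) (mWeight A) - rate (mEdge A) (mWeight A)) *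
            (cabDiameter (mEdge A) : ℝ) +
          (rate (mEdge A) (mWeight A) - minWeight (mEdge A) (mWeight A)) *
            (2 * (cabDiameter (mEdge A) : ℝ) + (epG : ℝ) + (dmax : ℝ) - 1) := by
  obtain ⟨hSC, hne⟩ := hA
  rintro _ ⟨i, j, k, n, hn, a, b, hak, hbj, rfl⟩
  obtain ⟨k₀, c, hk₀, hc, hm⟩ := hepmax.1
  have hc_le : c ≤ dmax := hdmax.2 ⟨k₀, hk₀, hc⟩
  obtain ⟨pb, hpb, rfl, rfl, -⟩ := exists_walk_of_mpPow_eq_coe n hbj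
  obtain ⟨L, hL, hheavy⟩ := exists_hasWalkWeightGE_via_critical hSC hne hcG hepG hk₀ hc hm hpb
    (by omega)
  have hb := hheavy.coe_le_mpPow
  rw [hbj, WithBot.coe_le_coe] at hb
  obtain ⟨pa, hpa, -, -, rfl⟩ := exists_walk_of_mpPow_eq_coe n hak
  have ha := walkWeight_le_rate_mul_add (w := mWeight A) hSC hne hpa
  have hL' : (L : ℝ) + 1 ≤ 2 * cabDiameter (mEdge A) + epG + dmax := by
    exact_mod_cast (by omega : L + 1 ≤ 2 * cabDiameter (mEdge A) + epG + dmax)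
  have hρδ := sub_nonneg.mpr (minWeight_le_rate (w := mWeight A) hSC hne)
  have := mul_le_mul_of_nonneg_left hL' hρδ
  linarith

end Transients
end
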